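/- If A is a homological Zₙ-set in a topological space X and B ⊆ A is closed in X, then B is a homological Zₙ-set in X. -/

import Mathlib

open CategoryTheory AlgebraicTopology Limits

/-- The singular chain complex of a topological space, with `ℤ` coefficients. -/
noncomputable def singularChains (X : Type) [TopologicalSpace X] :
    ChainComplex AddCommGrpCat ℕ :=
  (alternatingFaceMapComplex AddCommGrpCat).obj
    (TopCat.toSSet.obj (TopCat.of X) ⋙ AddCommGrpCat.free)

/-- The chain map induced by a continuous map. -/
noncomputable def singularChainsMap {X Y : Type} [TopologicalSpace X] [TopologicalSpace Y]
    (f : C(X, Y)) : singularChains X ⟶ singularChains Y :=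
  (alternatingFaceMapComplex AddCommGrpCat).map
    (Functor.whiskerRight (TopCat.toSSet.map (TopCat.ofHom f : TopCat.of X ⟶ TopCat.of Y)) AddCommGrpCat.free)

/-- The relative singular homology `H_k(W, V)` of a pair `(W, V)` with `V ⊆ W`,
defined as the homology of the cokernel of the map of singular chain complexes
induced by the inclusion. -/
noncomputable def relativeSingularHomology (W : Type) [TopologicalSpace W] (V : Set W)
    (k : ℕ) : AddCommGrpCat :=
  (cokernel (singularChainsMap ⟨(Subtype.val : V → W), continuous_subtype_val⟩)).homology k

/-- `A` is a homological `Z_n`-set in `X`: `A` is closed and `H_k(U, U \ A) = 0`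
for every open `U ⊆ X` and every `k ≤ n`. -/
def IsHomologicalZSet (X : Type) [TopologicalSpace X] (n : ℕ) (A : Set X) : Prop :=
  IsClosed A ∧ ∀ U : Set X, IsOpen U → ∀ k ≤ n,
    IsZero (relativeSingularHomology U {x : U | (x : X) ∉ A} k)

/-!
For `B ⊆ A` and `U` open, the triple `U ⊇ U \ B ⊇ U \ A` gives a short exact sequence of
relative chain complexes
`0 → C(U \ B, U \ A) → C(U, U \ A) → C(U, U \ B) → 0`.
The homology of the middle term vanishes up to degree `n` because `A` is a `Zₙ`-set, and so does
that of the left one, since it is the relative chain complex of `A` in the open set `U \ B`.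
The long exact homology sequence then kills `H_k(U, U \ B)` for `k ≤ n`.
-/

section Abelian

variable {𝒜 : Type*} [Category 𝒜] [Abelian 𝒜]

lemma shortExact_cokernel_map_comp {X Y Z : 𝒜} (f : X ⟶ Y) (g : Y ⟶ Z) [Mono g] :
    (ShortComplex.mk (cokernel.map f (f ≫ g) (𝟙 _) g (by simp))
      (cokernel.map (f ≫ g) g f (𝟙 _) (by simp)) (by ext; simp)).ShortExact := by
  have hexact := kernelCokernelCompSequence_exact f g
  have hδ : kernelCokernelCompSequence.δ f g = 0 := (isZero_kernel_of_mono g).eq_of_src _ _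
  have : Mono (cokernel.map f (f ≫ g) (𝟙 _) g (by simp)) := (hexact.exact 2).mono_g hδ
  have : Epi (cokernel.map (f ≫ g) g f (𝟙 _) (by simp)) :=
    inferInstanceAs (Epi ((kernelCokernelCompSequence f g).map' 4 5))
  exact ⟨hexact.exact 3⟩

lemma CategoryTheory.ShortComplex.ShortExact.isZero_homology_X₃
    {S : ShortComplex (ChainComplex 𝒜 ℕ)} (hS : S.ShortExact) {k : ℕ}
    (h₂ : IsZero (S.X₂.homology k)) (h₁ : IsZero (S.X₁.homology (k - 1))) :
    IsZero (S.X₃.homology k) := by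
  cases k with
  | zero =>
    have : Epi (S.g.f 0) := (hS.map_of_exact (HomologicalComplex.eval _ _ 0)).epi_g
    have : Epi (HomologicalComplex.homologyMap S.g 0) :=
      HomologicalComplex.epi_homologyMap_of_epi_of_not_rel S.g 0 Nat.succ_ne_zero
    exact IsZero.of_epi (HomologicalComplex.homologyMap S.g 0) h₂
  | succ j =>
    exact (hS.homology_exact₃ (j + 1) j rfl).isZero_X₂ (h₂.eq_of_src _ _) (h₁.eq_of_tgt _ _)

end Abelian

section SingularChains

variable {V W V' W' : Type} [TopologicalSpace V] [TopologicalSpace W] [TopologicalSpace V']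
  [TopologicalSpace W']

noncomputable def singularChainsFunctor : TopCat ⥤ ChainComplex AddCommGrpCat ℕ :=
  TopCat.toSSet ⋙ (Functor.whiskeringRight _ _ _).obj AddCommGrpCat.free ⋙
    alternatingFaceMapComplex AddCommGrpCat

lemma singularChainsMap_comp (f : C(V, W)) (g : C(W, W')) :
    singularChainsMap (g.comp f) = singularChainsMap f ≫ singularChainsMap g :=
  singularChainsFunctor.map_comp (TopCat.ofHom f) (TopCat.ofHom g)

noncomputable def singularChainsIsoOfHomeomorph (e : V ≃ₜ W) :
    singularChains V ≅ singularChains W :=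
  singularChainsFunctor.mapIso (TopCat.isoOfHomeo e)

lemma singularChainsIsoOfHomeomorph_hom (e : V ≃ₜ W) :
    (singularChainsIsoOfHomeomorph e).hom = singularChainsMap (e : C(V, W)) := rfl

lemma mono_singularChainsMap (f : C(V, W)) (hf : Function.Injective f) :
    Mono (singularChainsMap f) := by
  have : Mono (TopCat.ofHom f) := (TopCat.mono_iff_injective _).2 hf
  refine HomologicalComplex.mono_of_mono_f _ fun n => ?_
  change Mono (AddCommGrpCat.free.map ((TopCat.toSSet.map (TopCat.ofHom f)).app _))
  infer_instance

noncomputable def cokernelSingularChainsMapIso (i : C(V, W)) (i' : C(V', W'))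
    (eV : V ≃ₜ V') (eW : W ≃ₜ W') (h : ∀ x, eW (i x) = i' (eV x)) :
    cokernel (singularChainsMap i) ≅ cokernel (singularChainsMap i') :=
  cokernel.mapIso _ _ (singularChainsIsoOfHomeomorph eV) (singularChainsIsoOfHomeomorph eW) <| by
    simp only [singularChainsIsoOfHomeomorph_hom, ← singularChainsMap_comp]
    exact congrArg singularChainsMap (ContinuousMap.ext h)

end SingularChains

section ZSet

variable {X : Type} [TopologicalSpace X] {A B : Set X}

def sdiffInclusion (U : Set X) (hBA : B ⊆ A) : C({x : U | ↑x ∉ A}, {x : U | ↑x ∉ B}) :=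
  ⟨Set.inclusion fun _ hx hb => hx (hBA hb), continuous_inclusion _⟩

noncomputable def cokernelSdiffInclusionIso (U : Set X) (hBA : B ⊆ A) :
    cokernel (singularChainsMap (sdiffInclusion U hBA)) ≅
      cokernel (singularChainsMap ⟨(Subtype.val : {x : ↥(U \ B) | ↑x ∉ A} → ↥(U \ B)),
        continuous_subtype_val⟩) :=
  cokernelSingularChainsMapIso _ _
    { toFun := fun x => ⟨⟨x.1.1, x.1.2, fun hb => x.2 (hBA hb)⟩, x.2⟩
      invFun := fun y => ⟨⟨y.1.1, y.1.2.1⟩, y.2⟩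
      continuous_toFun := by fun_prop
      continuous_invFun := by fun_prop }
    { toFun := fun x => ⟨x.1.1, x.1.2, x.2⟩
      invFun := fun y => ⟨⟨y.1, y.2.1⟩, y.2.2⟩
      continuous_toFun := by fun_prop
      continuous_invFun := by fun_prop }
    fun _ => rfl

end ZSet

/-- A subset of a homological `Zₙ`-set in `X` which is closed in `X` is itself a
homological `Zₙ`-set in `X`. -/
theorem stmt_2 (X : Type) [TopologicalSpace X] (n : ℕ) (A B : Set X)
    (hA : IsHomologicalZSet X n A) (hBA : B ⊆ A) (hB : IsClosed B) :
    IsHomologicalZSet X n B := by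
  refine ⟨hB, fun U hU k hk => ?_⟩
  let f := singularChainsMap (sdiffInclusion U hBA)
  let g := singularChainsMap (⟨Subtype.val, continuous_subtype_val⟩ : C({x : U | ↑x ∉ B}, U))
  have : Mono g := mono_singularChainsMap _ Subtype.val_injective
  have hfg : singularChainsMap (⟨Subtype.val, continuous_subtype_val⟩ : C({x : U | ↑x ∉ A}, U)) =
      f ≫ g :=
    singularChainsMap_comp (sdiffInclusion U hBA) ⟨Subtype.val, continuous_subtype_val⟩
  have hS := shortExact_cokernel_map_comp f g
  refine hS.isZero_homology_X₃ ?_ ?_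
  · simpa only [relativeSingularHomology, hfg] using hA.2 U hU k hk
  · exact (hA.2 (U \ B) (hU.sdiff hB) (k - 1) (by omega)).of_iso
      ((HomologicalComplex.homologyFunctor _ _ _).mapIso (cokernelSdiffInclusionIso U hBA))
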